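/- arXiv:2206.01355 — 6 statements merged into one kernel-verified Lean document; each statement's English description precedes it below -/
import Mathlib

section
/- The Kato–Jones density admits the representation g_KJ(θ; μ, γ, λ, ρ) = π′ · (1/(2π)) {1 + 2γ̄ (cos(θ − μ) − ρ cos λ) / (1 + ρ² − 2ρ cos(θ − μ − λ))} + (1 − π′) · (1/(2π)) for all θ ∈ [−π, π), where γ̄ = (1 − ρ²)/(2(1 − ρ cos λ)) and π′ = γ/γ̄ ∈ [0, 1]. In other words, g_KJ(·; μ, γ, λ, ρ) = π′ · g_KJ(·; μ, γ̄, λ, ρ) + (1 − π′) · (1/(2π)), a mixture of the Kato–Jones density with maximal concentration parameter γ̄ and the uniform density on the circle. -/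
/-- The Kato–Jones density. -/
noncomputable def gKJ (μ γ lam ρ θ : ℝ) : ℝ :=
  (1 / (2 * Real.pi)) *
    (1 + 2 * γ * (Real.cos (θ - μ) - ρ * Real.cos lam) /
      (1 + ρ ^ 2 - 2 * ρ * Real.cos (θ - μ - lam)))

/-- The maximal concentration `γ̄(ρ, λ) = (1 - ρ²)/(2(1 - ρ cos λ))`. -/
noncomputable def gammaBar (ρ lam : ℝ) : ℝ :=
  (1 - ρ ^ 2) / (2 * (1 - ρ * Real.cos lam))

/-- The Kato–Jones density is a mixture, with weight `π' = γ/γ̄ ∈ [0,1]`, of the Kato–Jones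
density with maximal concentration `γ̄` and the uniform density on the circle. -/
theorem kato_jones_uniform_mixture_representation
    (μ γ lam ρ : ℝ)
    (hμ : μ ∈ Set.Ico (-Real.pi) Real.pi)
    (hγ : γ ∈ Set.Ico (0 : ℝ) 1)
    (hρ : ρ ∈ Set.Ico (0 : ℝ) 1)
    (hlam : lam ∈ Set.Ico (-Real.pi) Real.pi)
    (hconstraint : (ρ * Real.cos lam - γ) ^ 2 + (ρ * Real.sin lam) ^ 2 ≤ (1 - γ) ^ 2) :
    γ / gammaBar ρ lam ∈ Set.Icc (0 : ℝ) 1 ∧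
    ∀ θ ∈ Set.Ico (-Real.pi) Real.pi,
      gKJ μ γ lam ρ θ =
        (γ / gammaBar ρ lam) * gKJ μ (gammaBar ρ lam) lam ρ θ +
          (1 - γ / gammaBar ρ lam) * (1 / (2 * Real.pi)) := by
  obtain ⟨hγ0, hγ1⟩ := hγ
  obtain ⟨hρ0, hρ1⟩ := hρ
  have hc : Real.cos lam ≤ 1 := Real.cos_le_one lam
  have hden : 0 < 1 - ρ * Real.cos lam := by nlinarith
  have hnum : 0 < 1 - ρ ^ 2 := by nlinarith
  have hgb : 0 < gammaBar ρ lam := by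
    unfold gammaBar; positivity
  have hgbne : gammaBar ρ lam ≠ 0 := ne_of_gt hgb
  have hkey : 2 * γ * (1 - ρ * Real.cos lam) ≤ 1 - ρ ^ 2 := by
    have := Real.sin_sq_add_cos_sq lam
    nlinarith [Real.sin_sq_add_cos_sq lam]
  have hle : γ ≤ gammaBar ρ lam := by
    rw [gammaBar, le_div_iff₀ (by positivity)]
    nlinarith
  constructor
  · exact ⟨div_nonneg hγ0 hgb.le, (div_le_one hgb).2 hle⟩
  · intro θ hθ
    have hB : 0 < 1 + ρ ^ 2 - 2 * ρ * Real.cos (θ - μ - lam) := by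
      nlinarith [Real.cos_le_one (θ - μ - lam), Real.neg_one_le_cos (θ - μ - lam)]
    have hπ : Real.pi ≠ 0 := Real.pi_ne_zero
    unfold gKJ
    field_simp
    ring
end

section
/- The m-component Kato–Jones mixture density f(θ) = Σ_{k=1}^m π_k g_KJ(θ; μ_k, γ_k, λ_k, ρ_k) can be rewritten as f(θ) = Σ_{k=1}^m π′_k g_KJ(θ; μ_k, γ̄_k, λ_k, ρ_k) + π′_{m+1}/(2π) = (1/(2π)) Σ_{k=1}^m π′_k {1 + 2γ̄_k (cos(θ − μ_k) − ρ_k cos λ_k)/(1 + ρ_k² − 2ρ_k cos(θ − μ_k − λ_k))} + π′_{m+1}/(2π) for all θ ∈ [−π, π), where γ̄_k = (1 − ρ_k²)/(2(1 − ρ_k cos λ_k)), π′_k = π_k γ_k / γ̄_k for k = 1, …, m, and π′_{m+1} = 1 − Σ_{k=1}^m π′_k. -/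
/-- The m-component Kato–Jones mixture can be rewritten as a mixture of the maximal-concentration
Kato–Jones components with weights `π'_k = π_k γ_k / γ̄_k` and a uniform component with weight
`π'_{m+1} = 1 - Σ_{k=1}^m π'_k`. -/
theorem kato_jones_mixture_reparametrization
    (m : ℕ) (w μ_ γ_ lam_ ρ_ : Fin m → ℝ)
    (hw : ∀ k, w k ∈ Set.Ioo (0 : ℝ) 1)
    (hwsum : ∑ k, w k = 1)
    (hμ : ∀ k, μ_ k ∈ Set.Ico (-Real.pi) Real.pi)
    (hγ : ∀ k, γ_ k ∈ Set.Ico (0 : ℝ) 1)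
    (hρ : ∀ k, ρ_ k ∈ Set.Ico (0 : ℝ) 1)
    (hlam : ∀ k, lam_ k ∈ Set.Ico (-Real.pi) Real.pi)
    (hconstraint : ∀ k,
      (ρ_ k * Real.cos (lam_ k) - γ_ k) ^ 2 + (ρ_ k * Real.sin (lam_ k)) ^ 2
        ≤ (1 - γ_ k) ^ 2) :
    ∀ θ ∈ Set.Ico (-Real.pi) Real.pi,
      ∑ k, w k * gKJ (μ_ k) (γ_ k) (lam_ k) (ρ_ k) θ =
        (∑ k, (w k * γ_ k / gammaBar (ρ_ k) (lam_ k)) *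
            gKJ (μ_ k) (gammaBar (ρ_ k) (lam_ k)) (lam_ k) (ρ_ k) θ) +
          (1 - ∑ k, w k * γ_ k / gammaBar (ρ_ k) (lam_ k)) / (2 * Real.pi) := by
  intro θ _
  have key : ∀ k, w k * gKJ (μ_ k) (γ_ k) (lam_ k) (ρ_ k) θ =
      (w k * γ_ k / gammaBar (ρ_ k) (lam_ k)) *
        gKJ (μ_ k) (gammaBar (ρ_ k) (lam_ k)) (lam_ k) (ρ_ k) θ +
      (w k - w k * γ_ k / gammaBar (ρ_ k) (lam_ k)) / (2 * Real.pi) := by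
    intro k
    have hρk := hρ k
    have hbar : gammaBar (ρ_ k) (lam_ k) ≠ 0 := by
      have h1 : (0:ℝ) < 1 - (ρ_ k) ^ 2 := by nlinarith [hρk.1, hρk.2]
      have h2 : (0:ℝ) < 1 - ρ_ k * Real.cos (lam_ k) := by
        nlinarith [Real.neg_one_le_cos (lam_ k), Real.cos_le_one (lam_ k), hρk.1, hρk.2]
      have : 0 < gammaBar (ρ_ k) (lam_ k) := div_pos h1 (by linarith)
      exact ne_of_gt this
    have hπ : (2 * Real.pi) ≠ 0 := by positivity
    unfold gKJ
    set D := (Real.cos (θ - μ_ k) - ρ_ k * Real.cos (lam_ k)) /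
      (1 + (ρ_ k) ^ 2 - 2 * ρ_ k * Real.cos (θ - μ_ k - lam_ k)) with hD
    field_simp
    ring
  rw [Finset.sum_congr rfl (fun k _ => key k), Finset.sum_add_distrib, ← Finset.sum_div,
    Finset.sum_sub_distrib, hwsum]
end

section
/- Let a, α ∈ ℝ, let π₁, π₂ > 0, and let ξ₁, ξ₂ : ℤ⁺ → (0, ∞) be strictly positive sequences. Suppose that for every positive integer p, π₁ ξ₁(p) sin(pa − α) + π₂ ξ₂(p) sin(−pa − α) = 0. Then sin α = 0. -/
/-!
Expanding the sines, the hypothesis at order `p` reads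
`(A + B) cos (p a) sin α = (A - B) sin (p a) cos α` with `A = π₁ ξ₁ p > 0` and
`B = π₂ ξ₂ p > 0`, and `|A - B| < A + B`
gives `sin² α ≤ sin² (p a)`. By Dirichlet's approximation theorem applied to `a / π`, some
`p a` lies arbitrarily close to a multiple of `π`, so `sin (p a)` can be made arbitrarily small.
-/

open Real

lemma sin_sq_le_sin_sq_of_mul_sin_sub_add_mul_sin_neg_sub_eq_zero {A B x α : ℝ}
    (hA : 0 < A) (hB : 0 < B) (h : A * sin (x - α) + B * sin (-x - α) = 0) :
    sin α ^ 2 ≤ sin x ^ 2 := by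
  rw [show -x - α = -(x + α) by ring, sin_neg, sin_sub, sin_add] at h
  have hlin : (A + B) * (cos x * sin α) = (A - B) * (sin x * cos α) := by linarith
  have hweights : (A - B) ^ 2 ≤ (A + B) ^ 2 := by nlinarith
  have hcross : cos x ^ 2 * sin α ^ 2 ≤ sin x ^ 2 * cos α ^ 2 := by
    refine le_of_mul_le_mul_left ?_ (by positivity : 0 < (A + B) ^ 2)
    calc (A + B) ^ 2 * (cos x ^ 2 * sin α ^ 2) = (A - B) ^ 2 * (sin x ^ 2 * cos α ^ 2) := by
          linear_combination ((A + B) * (cos x * sin α) + (A - B) * (sin x * cos α)) * hlin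
      _ ≤ (A + B) ^ 2 * (sin x ^ 2 * cos α ^ 2) := by gcongr
  rw [cos_sq', cos_sq'] at hcross
  linarith

lemma abs_sin_pi_mul_le (t : ℝ) (m : ℤ) : |sin (π * t)| ≤ π * |t - m| :=
  calc |sin (π * t)| = |sin (π * t - m * π)| := by
        rw [sin_sub_int_mul_pi, abs_mul, abs_neg_one_zpow, one_mul]
    _ ≤ |π * t - m * π| := abs_sin_le_abs
    _ = π * |t - m| := by rw [mul_comm _ π, ← mul_sub, abs_mul, abs_of_pos pi_pos]

lemma exists_pos_nat_abs_sin_nat_mul_lt (a : ℝ) {ε : ℝ} (hε : 0 < ε) :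
    ∃ p : ℕ, 0 < p ∧ |sin (p * a)| < ε := by
  obtain ⟨n, hn⟩ := exists_nat_gt (π / ε)
  have hn₀ : 0 < n := Nat.cast_pos.mp ((div_pos pi_pos hε).trans hn)
  obtain ⟨p, hp, -, hdirichlet⟩ := exists_nat_abs_mul_sub_round_le (a / π) hn₀
  refine ⟨p, hp, ?_⟩
  rw [div_lt_iff₀ hε] at hn
  calc |sin (p * a)| = |sin (π * (p * (a / π)))| := by
        rw [mul_div_assoc', mul_div_cancel₀ _ pi_ne_zero]
    _ ≤ π * |p * (a / π) - round (p * (a / π))| := abs_sin_pi_mul_le _ _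
    _ ≤ π * (1 / (n + 1)) := by gcongr
    _ < ε := by
        rw [mul_one_div, div_lt_iff₀ (by positivity)]
        linarith

/-- If `π₁ ξ₁(p) sin(pa − α) + π₂ ξ₂(p) sin(−pa − α) = 0` for every positive integer `p`,
with `π₁, π₂ > 0` and strictly positive sequences `ξ₁, ξ₂`, then `sin α = 0`. -/
theorem weighted_sine_vanishing_implies_sin_zero
    (a α π₁ π₂ : ℝ) (hπ₁ : 0 < π₁) (hπ₂ : 0 < π₂)
    (ξ₁ ξ₂ : ℕ → ℝ)
    (hξ₁ : ∀ p : ℕ, 0 < p → 0 < ξ₁ p)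
    (hξ₂ : ∀ p : ℕ, 0 < p → 0 < ξ₂ p)
    (h : ∀ p : ℕ, 0 < p →
      π₁ * ξ₁ p * Real.sin (p * a - α) + π₂ * ξ₂ p * Real.sin (-(p * a) - α) = 0) :
    Real.sin α = 0 := by
  by_contra hα
  obtain ⟨p, hp, hsmall⟩ := exists_pos_nat_abs_sin_nat_mul_lt a (abs_pos.mpr hα)
  have hbound := sin_sq_le_sin_sq_of_mul_sin_sub_add_mul_sin_neg_sub_eq_zero
    (mul_pos hπ₁ (hξ₁ p hp)) (mul_pos hπ₂ (hξ₂ p hp)) (h p hp)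
  exact (sq_le_sq.mp hbound).not_gt hsmall
end

section
/- Let Θ be a random angle with Kato–Jones density g_KJ(·; μ, γ, λ, ρ). Then for every positive integer p, the p-th trigonometric moment is E(e^{ipΘ}) = ∫_{−π}^{π} e^{ipθ} g_KJ(θ; μ, γ, λ, ρ) dθ = γ (ρ e^{iλ})^{−1} (ρ e^{i(μ+λ)})^p = γ ρ^{p−1} e^{i(pμ + (p−1)λ)} (with the convention ρ⁰ = 1 when ρ = 0). -/
open Complex ComplexConjugate intervalIntegral
open scoped Real

theorem integral_exp_mul_I_zpow (n : ℤ) :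
    ∫ θ in -π..π, cexp (θ * I) ^ n = if n = 0 then (2 * π : ℂ) else 0 := by
  split_ifs with hn
  · simp [hn]
    ring
  have hnI : (n : ℂ) * I ≠ 0 := mul_ne_zero (by exact_mod_cast hn) I_ne_zero
  have hperiod : cexp (n * I * π) = cexp (n * I * ↑(-π)) := by
    rw [show (n * I * π : ℂ) = n * I * ↑(-π) + n * (2 * π * I) by push_cast; ring, exp_add,
      exp_int_mul_two_pi_mul_I, mul_one]
  simp_rw [← exp_int_mul, ← mul_assoc, mul_right_comm _ _ I]
  rw [integral_exp_mul_complex hnI, hperiod, sub_self, zero_div]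

theorem integral_exp_mul_I_pow {n : ℕ} (hn : n ≠ 0) : ∫ θ in -π..π, cexp (θ * I) ^ n = 0 := by
  simpa [hn] using integral_exp_mul_I_zpow n

theorem hasSum_intervalIntegral_mul_pow {a b r : ℝ} {f u : ℝ → ℂ} (hf : Continuous f)
    (hu : Continuous u) (hr : r < 1) (hur : ∀ θ, ‖u θ‖ ≤ r) :
    HasSum (fun k : ℕ => ∫ θ in a..b, f θ * u θ ^ k) (∫ θ in a..b, f θ / (1 - u θ)) := by
  have hr0 : 0 ≤ r := (norm_nonneg _).trans (hur 0)
  refine hasSum_integral_of_dominated_convergence (fun k θ => ‖f θ‖ * r ^ k)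
    (fun k => (hf.mul (hu.pow k)).aestronglyMeasurable) (fun k => ?_)
    (.of_forall fun θ _ => (summable_geometric_of_lt_one hr0 hr).mul_left _) ?_
    (.of_forall fun θ _ => ?_)
  · refine .of_forall fun θ _ => ?_
    rw [norm_mul, norm_pow]
    gcongr
    exact hur θ
  · simp_rw [tsum_mul_left, tsum_geometric_of_lt_one hr0 hr]
    exact (hf.norm.mul continuous_const).intervalIntegrable _ _
  · rw [div_eq_mul_inv]
    exact (hasSum_geometric_of_norm_lt_one ((hur θ).trans_lt hr)).mul_left _

theorem continuous_div_one_sub {f u : ℝ → ℂ} (hf : Continuous f) (hu : Continuous u)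
    (hu1 : ∀ θ, ‖u θ‖ < 1) : Continuous fun θ => f θ / (1 - u θ) :=
  hf.div (continuous_const.sub hu) fun θ h => by
    simpa [← sub_eq_zero.1 h] using hu1 θ

theorem continuous_exp_mul_I : Continuous fun θ : ℝ => cexp (θ * I) := by
  fun_prop

theorem norm_mul_exp_mul_I (c : ℂ) (θ : ℝ) : ‖c * cexp (θ * I)‖ = ‖c‖ := by
  rw [norm_mul, norm_exp_ofReal_mul_I, mul_one]

theorem norm_mul_inv_exp_mul_I (c : ℂ) (θ : ℝ) : ‖c * (cexp (θ * I))⁻¹‖ = ‖c‖ := by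
  rw [norm_mul, norm_inv, norm_exp_ofReal_mul_I, inv_one, mul_one]

theorem continuous_exp_mul_I_pow_div_one_sub {c : ℂ} (hc : ‖c‖ < 1) (n : ℕ) :
    Continuous fun θ : ℝ => cexp (θ * I) ^ n / (1 - c * cexp (θ * I)) :=
  continuous_div_one_sub (continuous_exp_mul_I.pow n) (continuous_const.mul continuous_exp_mul_I)
    fun θ => (norm_mul_exp_mul_I c θ).trans_lt hc

theorem continuous_exp_mul_I_pow_div_one_sub_inv {c : ℂ} (hc : ‖c‖ < 1) (n : ℕ) :
    Continuous fun θ : ℝ => cexp (θ * I) ^ n / (1 - c * (cexp (θ * I))⁻¹) :=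
  continuous_div_one_sub (continuous_exp_mul_I.pow n)
    (continuous_const.mul (continuous_exp_mul_I.inv₀ fun _ => exp_ne_zero _))
    fun θ => (norm_mul_inv_exp_mul_I c θ).trans_lt hc

theorem integral_exp_mul_I_pow_div_one_sub {c : ℂ} (hc : ‖c‖ < 1) {n : ℕ} (hn : n ≠ 0) :
    ∫ θ in -π..π, cexp (θ * I) ^ n / (1 - c * cexp (θ * I)) = 0 := by
  refine (hasSum_intervalIntegral_mul_pow (f := fun θ => cexp (θ * I) ^ n)
    (u := fun θ => c * cexp (θ * I)) (continuous_exp_mul_I.pow n)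
    (continuous_const.mul continuous_exp_mul_I) hc (fun θ => (norm_mul_exp_mul_I c θ).le)).unique ?_
  convert hasSum_zero with k
  simp_rw [mul_pow, mul_left_comm _ (c ^ k), ← pow_add, integral_const_mul,
    integral_exp_mul_I_pow (by omega : n + k ≠ 0), mul_zero]

theorem integral_exp_mul_I_pow_div_one_sub_inv {c : ℂ} (hc : ‖c‖ < 1) (m : ℕ) :
    ∫ θ in -π..π, cexp (θ * I) ^ m / (1 - c * (cexp (θ * I))⁻¹) = 2 * π * c ^ m := by
  refine (hasSum_intervalIntegral_mul_pow (f := fun θ => cexp (θ * I) ^ m)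
    (u := fun θ => c * (cexp (θ * I))⁻¹) (continuous_exp_mul_I.pow m)
    (continuous_const.mul (continuous_exp_mul_I.inv₀ fun _ => exp_ne_zero _)) hc
    (fun θ => (norm_mul_inv_exp_mul_I c θ).le)).unique ?_
  have hterm (k : ℕ) (θ : ℝ) :
      cexp (θ * I) ^ m * (c * (cexp (θ * I))⁻¹) ^ k = c ^ k * cexp (θ * I) ^ ((m : ℤ) - k) := by
    rw [zpow_sub₀ (exp_ne_zero _), zpow_natCast, zpow_natCast, mul_pow, inv_pow, div_eq_mul_inv]
    ring
  convert hasSum_ite_eq m (2 * π * c ^ m : ℂ) with k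
  simp_rw [hterm, integral_const_mul, integral_exp_mul_I_zpow, sub_eq_zero, Nat.cast_inj,
    eq_comm (a := m)]
  split_ifs with hk
  · rw [hk, mul_comm]
  · rw [mul_zero]

theorem re_exp_mul_I_div_one_sub (x y ρ : ℝ) :
    (cexp (x * I) / (1 - ρ * cexp (y * I))).re =
      (Real.cos x - ρ * Real.cos (x - y)) / (1 + ρ ^ 2 - 2 * ρ * Real.cos y) := by
  have hnormSq : normSq (1 - ρ * cexp (y * I)) = 1 + ρ ^ 2 - 2 * ρ * Real.cos y := by
    rw [normSq_apply]
    simp only [sub_re, sub_im, one_re, one_im, re_ofReal_mul, im_ofReal_mul,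
      exp_ofReal_mul_I_re, exp_ofReal_mul_I_im]
    linear_combination ρ ^ 2 * Real.sin_sq_add_cos_sq y
  rw [div_re, hnormSq, ← add_div, Real.cos_sub]
  simp only [sub_re, sub_im, one_re, one_im, re_ofReal_mul, im_ofReal_mul,
    exp_ofReal_mul_I_re, exp_ofReal_mul_I_im]
  ring

theorem gKJ_eq_re (μ γ lam ρ θ : ℝ) :
    gKJ μ γ lam ρ θ = (2 * π)⁻¹ *
      (1 + γ * (2 * (cexp ((θ - μ : ℝ) * I) / (1 - ρ * cexp ((θ - μ - lam : ℝ) * I))).re)) := by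
  rw [gKJ, re_exp_mul_I_div_one_sub, sub_sub_cancel]
  ring

theorem conj_exp_ofReal_mul_I (x : ℝ) : conj (cexp (x * I)) = (cexp (x * I))⁻¹ := by
  rw [← exp_conj, map_mul, conj_ofReal, conj_I, mul_neg, exp_neg]

theorem ofReal_gKJ (μ γ lam ρ θ : ℝ) :
    (gKJ μ γ lam ρ θ : ℂ) = (2 * π : ℂ)⁻¹ * (1 +
      γ * (cexp (μ * I))⁻¹ *
        (cexp (θ * I) / (1 - ρ * (cexp ((μ + lam : ℝ) * I))⁻¹ * cexp (θ * I))) +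
      γ * cexp (μ * I) *
        ((cexp (θ * I))⁻¹ / (1 - ρ * cexp ((μ + lam : ℝ) * I) * (cexp (θ * I))⁻¹))) := by
  rw [gKJ_eq_re]
  push_cast
  simp only [re_eq_add_conj, sub_mul, add_mul, exp_sub, exp_add, map_div₀, map_sub, map_one,
    map_mul, conj_ofReal, conj_exp_ofReal_mul_I, div_inv_eq_mul]
  ring

theorem exp_mul_ofReal_gKJ (μ γ lam ρ θ : ℝ) (q : ℕ) :
    cexp (I * ↑(q + 1) * θ) * gKJ μ γ lam ρ θ = (2 * π : ℂ)⁻¹ * (cexp (θ * I) ^ (q + 1) +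
      γ * (cexp (μ * I))⁻¹ *
        (cexp (θ * I) ^ (q + 2) / (1 - ρ * (cexp ((μ + lam : ℝ) * I))⁻¹ * cexp (θ * I))) +
      γ * cexp (μ * I) *
        (cexp (θ * I) ^ q / (1 - ρ * cexp ((μ + lam : ℝ) * I) * (cexp (θ * I))⁻¹))) := by
  have hz : cexp (θ * I) * (cexp (θ * I))⁻¹ = 1 := mul_inv_cancel₀ (exp_ne_zero _)
  rw [ofReal_gKJ, show I * ↑(q + 1) * θ = ↑(q + 1) * (θ * I) by ring, exp_nat_mul]
  linear_combination (2 * π : ℂ)⁻¹ * γ * cexp (μ * I) * cexp (θ * I) ^ q /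
    (1 - ρ * cexp ((μ + lam : ℝ) * I) * (cexp (θ * I))⁻¹) * hz

theorem kato_jones_trig_moment_general
    (μ γ lam ρ : ℝ)
    (hρ : ρ ∈ Set.Ico (0 : ℝ) 1)
    (p : ℕ) (hp : 0 < p) :
    (∫ θ in (-Real.pi)..Real.pi,
        Complex.exp (Complex.I * p * θ) * (gKJ μ γ lam ρ θ : ℂ)) =
      (γ : ℂ) * (ρ : ℂ) ^ (p - 1) *
        Complex.exp (Complex.I * ((p : ℂ) * (μ : ℂ) + ((p : ℂ) - 1) * (lam : ℂ))) := by
  obtain ⟨q, rfl⟩ := Nat.exists_eq_add_one_of_ne_zero hp.ne'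
  set l := cexp ((μ + lam : ℝ) * I)
  have hb : ‖ρ * l‖ < 1 := by
    rw [norm_mul_exp_mul_I, norm_real, Real.norm_of_nonneg hρ.1]
    exact hρ.2
  have hb' : ‖ρ * l⁻¹‖ < 1 := by
    rw [norm_mul_inv_exp_mul_I, norm_real, Real.norm_of_nonneg hρ.1]
    exact hρ.2
  have hphase :
      cexp (I * (↑(q + 1 : ℕ) * μ + (↑(q + 1 : ℕ) - 1) * lam)) = cexp (μ * I) * l ^ q := by
    rw [← exp_nat_mul, ← exp_add]
    congr 1
    push_cast
    ring
  have hcont₁ := continuous_exp_mul_I_pow_div_one_sub hb' (q + 2)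
  have hcont₂ := continuous_exp_mul_I_pow_div_one_sub_inv hb q
  simp_rw [exp_mul_ofReal_gKJ]
  rw [integral_const_mul, integral_add, integral_add, integral_const_mul, integral_const_mul,
    integral_exp_mul_I_pow q.succ_ne_zero, integral_exp_mul_I_pow_div_one_sub hb' (by omega),
    integral_exp_mul_I_pow_div_one_sub_inv hb, hphase, Nat.add_sub_cancel]
  · field_simp
    ring
  all_goals exact Continuous.intervalIntegrable (by fun_prop) _ _

/-- The `p`-th trigonometric moment of the Kato–Jones distribution equals
`γ ρ^{p−1} e^{i(pμ + (p−1)λ)}`. -/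
theorem kato_jones_trig_moment
    (μ γ lam ρ : ℝ)
    (hμ : μ ∈ Set.Ico (-Real.pi) Real.pi)
    (hγ : γ ∈ Set.Ico (0 : ℝ) 1)
    (hρ : ρ ∈ Set.Ico (0 : ℝ) 1)
    (hlam : lam ∈ Set.Ico (-Real.pi) Real.pi)
    (hconstraint : (ρ * Real.cos lam - γ) ^ 2 + (ρ * Real.sin lam) ^ 2 ≤ (1 - γ) ^ 2)
    (p : ℕ) (hp : 0 < p) :
    (∫ θ in (-Real.pi)..Real.pi,
        Complex.exp (Complex.I * p * θ) * (gKJ μ γ lam ρ θ : ℂ)) =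
      (γ : ℂ) * (ρ : ℂ) ^ (p - 1) *
        Complex.exp (Complex.I * ((p : ℂ) * (μ : ℂ) + ((p : ℂ) - 1) * (lam : ℂ))) :=
  kato_jones_trig_moment_general μ γ lam ρ hρ p hp
end

section
/- For parameters μ ∈ [−π, π), γ ∈ [0, 1), ρ ∈ [0, 1), λ ∈ [−π, π) satisfying (ρ cos λ − γ)² + (ρ sin λ)² ≤ (1 − γ)², the Kato–Jones function g_KJ(·; μ, γ, λ, ρ) is a probability density on [−π, π): g_KJ(θ; μ, γ, λ, ρ) ≥ 0 for all θ ∈ [−π, π), and ∫_{−π}^{π} g_KJ(θ; μ, γ, λ, ρ) dθ = 1. -/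
open Real Complex ComplexConjugate Metric

noncomputable def kjHolomorphic (γ : ℝ) (β z : ℂ) : ℂ :=
  1 + 2 * γ * z / (1 - conj β * z)

lemma one_add_two_mul_re_div_norm_sq_nonneg {γ : ℝ} {z β : ℂ} (hz : ‖z‖ = 1) (hγ : 0 ≤ γ)
    (hβ : ‖β - γ‖ ≤ 1 - γ) : 0 ≤ 1 + 2 * γ * (z - β).re / ‖z - β‖ ^ 2 := by
  rcases eq_or_ne (z - β) 0 with hzβ | hzβ
  · simp [hzβ]
  have hdist : γ ≤ ‖z - β + γ‖ := by
    have := norm_sub_norm_le z (β - γ)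
    rw [← sub_add] at this
    linarith
  have hexpand : ‖z - β + γ‖ ^ 2 = ‖z - β‖ ^ 2 + 2 * γ * (z - β).re + γ ^ 2 := by
    simp only [Complex.sq_norm, normSq_apply, add_re, add_im, ofReal_re, ofReal_im]
    ring
  have hpos : 0 < ‖z - β‖ ^ 2 := by positivity
  rw [one_add_div hpos.ne']
  exact div_nonneg (by nlinarith [pow_le_pow_left₀ hγ hdist 2]) hpos.le

lemma re_kjHolomorphic_of_norm_eq_one {γ : ℝ} {z β : ℂ} (hz : ‖z‖ = 1) :
    (kjHolomorphic γ β z).re = 1 + 2 * γ * (z - β).re / ‖z - β‖ ^ 2 := by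
  have hz0 : z ≠ 0 := by rintro rfl; simp at hz
  have hconj : conj z = z⁻¹ := by
    rw [inv_def, ← Complex.sq_norm, hz]; simp
  have hinv : z / (1 - conj β * z) = (conj (z - β))⁻¹ := by
    rw [map_sub, hconj, show z⁻¹ - conj β = (1 - conj β * z) / z by field_simp, inv_div]
  rw [kjHolomorphic, mul_div_assoc, hinv, ← map_inv₀]
  simp [-map_sub, inv_re, Complex.sq_norm, mul_div_assoc]

lemma differentiableOn_kjHolomorphic (γ : ℝ) {β : ℂ} (hβ : ‖β‖ < 1) :
    DifferentiableOn ℂ (kjHolomorphic γ β) (closedBall 0 1) := by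
  have hden : ∀ z ∈ closedBall (0 : ℂ) 1, 1 - conj β * z ≠ 0 := by
    intro z hz h
    have hlt : ‖conj β * z‖ < 1 := by
      rw [norm_mul, RCLike.norm_conj]
      exact mul_lt_one_of_nonneg_of_lt_one_left (norm_nonneg _) hβ (mem_closedBall_zero_iff.mp hz)
    rw [← sub_eq_zero.mp h, norm_one] at hlt
    exact hlt.false
  unfold kjHolomorphic
  fun_prop (disch := assumption)

lemma circleAverage_re_kjHolomorphic (γ : ℝ) {β : ℂ} (hβ : ‖β‖ < 1) :
    circleAverage (fun z ↦ (kjHolomorphic γ β z).re) 0 1 = 1 := by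
  have hdiff := differentiableOn_kjHolomorphic γ hβ
  have hint : CircleIntegrable (kjHolomorphic γ β) 0 1 :=
    (hdiff.continuousOn.mono sphere_subset_closedBall).circleIntegrable zero_le_one
  have hmean : circleAverage (kjHolomorphic γ β) 0 1 = 1 := by
    rw [DiffContOnCl.circleAverage, kjHolomorphic]
    · simp
    · rw [abs_one]
      exact hdiff.diffContOnCl_ball subset_rfl
  simpa [hmean, Function.comp_def] using reCLM.circleAverage_comp_comm hint

lemma circleAverage_one_add_two_mul_re_div_norm_sq (γ : ℝ) {β : ℂ} (hβ : ‖β‖ < 1) :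
    circleAverage (fun z ↦ 1 + 2 * γ * (z - β).re / ‖z - β‖ ^ 2) 0 1 = 1 := by
  refine (circleAverage_congr_sphere fun z hz ↦ ?_).trans
    (circleAverage_re_kjHolomorphic γ hβ)
  exact (re_kjHolomorphic_of_norm_eq_one (by simpa using hz)).symm

lemma integral_comp_circleMap_sub {E : Type*} [NormedAddCommGroup E] [NormedSpace ℝ E]
    [CompleteSpace E] (f : ℂ → E) (c : ℂ) (R μ : ℝ) :
    ∫ θ in (-π)..π, f (circleMap c R (θ - μ)) = (2 * π) • circleAverage f c R := by
  rw [circleAverage_eq_integral_add (-π - μ), smul_inv_smul₀ (by positivity),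
    intervalIntegral.integral_comp_sub_right (fun θ ↦ f (circleMap c R θ)),
    intervalIntegral.integral_comp_add_right (fun θ ↦ f (circleMap c R θ))]
  congr 1 <;> ring

lemma gKJ_eq_circleMap (μ γ lam ρ θ : ℝ) :
    gKJ μ γ lam ρ θ = (2 * π)⁻¹ * (1 + 2 * γ * (circleMap 0 1 (θ - μ) - circleMap 0 ρ lam).re /
      ‖circleMap 0 1 (θ - μ) - circleMap 0 ρ lam‖ ^ 2) := by
  have hre : (circleMap 0 1 (θ - μ) - circleMap 0 ρ lam).re =
      Real.cos (θ - μ) - ρ * Real.cos lam := by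
    simp [circleMap, exp_ofReal_mul_I_re, -ofReal_sub]
  have hnorm : ‖circleMap 0 1 (θ - μ) - circleMap 0 ρ lam‖ ^ 2 =
      1 + ρ ^ 2 - 2 * ρ * Real.cos (θ - μ - lam) := by
    simp only [circleMap, ofReal_one, one_mul, zero_add, Complex.sq_norm, normSq_apply, sub_re,
      exp_ofReal_mul_I_re, mul_re, ofReal_re, ofReal_im, exp_ofReal_mul_I_im, zero_mul, sub_zero,
      sub_im, mul_im, add_zero]
    rw [Real.cos_sub (θ - μ)]
    linear_combination Real.sin_sq_add_cos_sq (θ - μ) + ρ ^ 2 * Real.sin_sq_add_cos_sq lam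
  rw [gKJ, hre, hnorm, one_div]

theorem kato_jones_is_density_general
    (μ γ lam ρ : ℝ)
    (hγ : γ ∈ Set.Ico (0 : ℝ) 1)
    (hρ : ρ ∈ Set.Ico (0 : ℝ) 1)
    (hconstraint : (ρ * Real.cos lam - γ) ^ 2 + (ρ * Real.sin lam) ^ 2 ≤ (1 - γ) ^ 2) :
    (∀ θ ∈ Set.Ico (-Real.pi) Real.pi, 0 ≤ gKJ μ γ lam ρ θ) ∧
    (∫ θ in (-Real.pi)..Real.pi, gKJ μ γ lam ρ θ) = 1 := by
  have hβγ : ‖circleMap 0 ρ lam - γ‖ ≤ 1 - γ := by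
    rw [← sq_le_sq₀ (norm_nonneg _) (by linarith [hγ.2]), Complex.sq_norm, normSq_apply]
    simpa [circleMap, sq] using hconstraint
  have hβ : ‖circleMap 0 ρ lam‖ < 1 := by
    rw [norm_circleMap_zero, abs_of_nonneg hρ.1]
    exact hρ.2
  refine ⟨fun θ _ ↦ ?_, ?_⟩
  · rw [gKJ_eq_circleMap]
    exact mul_nonneg (by positivity)
      (one_add_two_mul_re_div_norm_sq_nonneg (by simp) hγ.1 hβγ)
  · simp_rw [gKJ_eq_circleMap]
    rw [intervalIntegral.integral_const_mul,
      integral_comp_circleMap_sub (fun z ↦ 1 + 2 * γ * (z - circleMap 0 ρ lam).re /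
        ‖z - circleMap 0 ρ lam‖ ^ 2),
      circleAverage_one_add_two_mul_re_div_norm_sq γ hβ, smul_eq_mul, mul_one,
      inv_mul_cancel₀ (by positivity)]

/-- Under the Kato–Jones parameter constraint, `gKJ` is a probability density on `[-π, π)`:
it is nonnegative there, and it integrates to one. -/
theorem kato_jones_is_density
    (μ γ lam ρ : ℝ)
    (hμ : μ ∈ Set.Ico (-Real.pi) Real.pi)
    (hγ : γ ∈ Set.Ico (0 : ℝ) 1)
    (hρ : ρ ∈ Set.Ico (0 : ℝ) 1)
    (hlam : lam ∈ Set.Ico (-Real.pi) Real.pi)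
    (hconstraint : (ρ * Real.cos lam - γ) ^ 2 + (ρ * Real.sin lam) ^ 2 ≤ (1 - γ) ^ 2) :
    (∀ θ ∈ Set.Ico (-Real.pi) Real.pi, 0 ≤ gKJ μ γ lam ρ θ) ∧
    (∫ θ in (-Real.pi)..Real.pi, gKJ μ γ lam ρ θ) = 1 :=
  kato_jones_is_density_general μ γ lam ρ hγ hρ hconstraint
end

section
/- The m-component Kato–Jones mixture is not identifiable in (π_k, γ_k): if two parameterizations {(π_k, μ_k, γ_k, λ_k, ρ_k)}_{k=1}^m and {(π̃_k, μ_k, γ̃_k, λ_k, ρ_k)}_{k=1}^m (same μ_k, λ_k, ρ_k, both with mixing weights in (0,1) summing to 1 and satisfying the Kato–Jones parameter constraints) satisfy π_k γ_k = π̃_k γ̃_k for every k = 1, …, m, then the corresponding mixture densities coincide: Σ_{k=1}^m π_k g_KJ(θ; μ_k, γ_k, λ_k, ρ_k) = Σ_{k=1}^m π̃_k g_KJ(θ; μ_k, γ̃_k, λ_k, ρ_k) for all θ ∈ [−π, π). -/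
/-- Non-identifiability of the Kato–Jones mixture in `(π_k, γ_k)`: if two parameterizations
share the same `μ_k, λ_k, ρ_k` and satisfy `π_k γ_k = π̃_k γ̃_k` for every `k`, then the two
mixture densities coincide on `[-π, π)`. -/
theorem kato_jones_mixture_nonidentifiable
    (m : ℕ) (μ_ lam_ ρ_ : Fin m → ℝ) (w γ_ w' γ'_ : Fin m → ℝ)
    (hμ : ∀ k, μ_ k ∈ Set.Ico (-Real.pi) Real.pi)
    (hρ : ∀ k, ρ_ k ∈ Set.Ico (0 : ℝ) 1)
    (hlam : ∀ k, lam_ k ∈ Set.Ico (-Real.pi) Real.pi)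
    (hw : ∀ k, w k ∈ Set.Ioo (0 : ℝ) 1) (hwsum : ∑ k, w k = 1)
    (hw' : ∀ k, w' k ∈ Set.Ioo (0 : ℝ) 1) (hwsum' : ∑ k, w' k = 1)
    (hγ : ∀ k, γ_ k ∈ Set.Ico (0 : ℝ) 1)
    (hγ' : ∀ k, γ'_ k ∈ Set.Ico (0 : ℝ) 1)
    (hconstraint : ∀ k,
      (ρ_ k * Real.cos (lam_ k) - γ_ k) ^ 2 + (ρ_ k * Real.sin (lam_ k)) ^ 2
        ≤ (1 - γ_ k) ^ 2)
    (hconstraint' : ∀ k,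
      (ρ_ k * Real.cos (lam_ k) - γ'_ k) ^ 2 + (ρ_ k * Real.sin (lam_ k)) ^ 2
        ≤ (1 - γ'_ k) ^ 2)
    (hprod : ∀ k, w k * γ_ k = w' k * γ'_ k) :
    ∀ θ ∈ Set.Ico (-Real.pi) Real.pi,
      ∑ k, w k * gKJ (μ_ k) (γ_ k) (lam_ k) (ρ_ k) θ =
        ∑ k, w' k * gKJ (μ_ k) (γ'_ k) (lam_ k) (ρ_ k) θ := by
  intro θ _
  have key : ∀ (v g : Fin m → ℝ) (k : Fin m),
      v k * gKJ (μ_ k) (g k) (lam_ k) (ρ_ k) θ =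
        v k * (1 / (2 * Real.pi)) +
          (v k * g k) * ((1 / (2 * Real.pi)) *
            (2 * (Real.cos (θ - μ_ k) - ρ_ k * Real.cos (lam_ k)) /
              (1 + ρ_ k ^ 2 - 2 * ρ_ k * Real.cos (θ - μ_ k - lam_ k)))) := by
    intro v g k
    unfold gKJ
    ring
  calc ∑ k, w k * gKJ (μ_ k) (γ_ k) (lam_ k) (ρ_ k) θ
      = ∑ k, (w k * (1 / (2 * Real.pi)) +
          (w k * γ_ k) * ((1 / (2 * Real.pi)) *
            (2 * (Real.cos (θ - μ_ k) - ρ_ k * Real.cos (lam_ k)) /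
              (1 + ρ_ k ^ 2 - 2 * ρ_ k * Real.cos (θ - μ_ k - lam_ k))))) := by
        exact Finset.sum_congr rfl fun k _ => key w γ_ k
    _ = ∑ k, (w' k * (1 / (2 * Real.pi)) +
          (w' k * γ'_ k) * ((1 / (2 * Real.pi)) *
            (2 * (Real.cos (θ - μ_ k) - ρ_ k * Real.cos (lam_ k)) /
              (1 + ρ_ k ^ 2 - 2 * ρ_ k * Real.cos (θ - μ_ k - lam_ k))))) := by
        rw [Finset.sum_add_distrib, Finset.sum_add_distrib,
          ← Finset.sum_mul, ← Finset.sum_mul, hwsum, hwsum']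
        congr 1
        exact Finset.sum_congr rfl fun k _ => by rw [hprod k]
    _ = ∑ k, w' k * gKJ (μ_ k) (γ'_ k) (lam_ k) (ρ_ k) θ := by
        exact Finset.sum_congr rfl fun k _ => (key w' γ'_ k).symm
end
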